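/- arXiv:2203.14418 — 5 statements merged into one kernel-verified Lean document; each statement's English description precedes it below -/
import Mathlib

section
/- Let H1, H2, W be n×n real positive semidefinite matrices with H1 ≥ H2 ≥ W ≥ 0 in the Loewner order. Then det(H2 − W) · det(H1) ≤ det(H1 − W) · det(H2). -/
/-!
For invertible `H`, write `W = Rᴴ * R`; the matrix determinant lemma gives
`det (H - W) = det H * det (1 - R * H⁻¹ * Rᴴ)`. Since inversion is antitone on positive definite
matrices, `1 - R * H⁻¹ * Rᴴ` increases with `H`, and it is positive semidefinite when `W ≤ H` (a
Schur complement argument), so monotonicity of `det` on positive semidefinite matrices compares the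
two ratios `det (Hᵢ - W) / det Hᵢ`. If `H2` is singular then `det (H2 - W) ≤ det H2 = 0`.
-/

open Matrix
open scoped MatrixOrder ComplexOrder

namespace Matrix

variable {m n : Type*} [Fintype m] [Fintype n] [DecidableEq m] [DecidableEq n]

-- Both sides say that the block matrix `fromBlocks A B Bᴴ D` is positive semidefinite.
theorem posSemidef_sub_mul_inv_mul_conjTranspose_iff {𝕜 : Type*} [RCLike 𝕜]
    {A : Matrix m m 𝕜} {D : Matrix n n 𝕜} (hA : A.PosDef) (hD : D.PosDef) (B : Matrix m n 𝕜) :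
    (A - B * D⁻¹ * Bᴴ).PosSemidef ↔ (D - Bᴴ * A⁻¹ * B).PosSemidef := by
  have := hA.isUnit.invertible
  have := hD.isUnit.invertible
  rw [← PosDef.fromBlocks₂₂ A B hD, PosDef.fromBlocks₁₁ B D hA]

theorem PosDef.posSemidef_inv_sub_inv {𝕜 : Type*} [RCLike 𝕜] {A B : Matrix n n 𝕜}
    (hB : B.PosDef) (hAB : (A - B).PosSemidef) : (B⁻¹ - A⁻¹).PosSemidef := by
  have hA : A.PosDef := by simpa using hB.add_posSemidef hAB
  simpa using (posSemidef_sub_mul_inv_mul_conjTranspose_iff hA hB.inv 1).mp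
    (by simpa [nonsing_inv_nonsing_inv B hB.det_pos.ne'.isUnit] using hAB)

theorem PosSemidef.one_le_det_one_add {M : Matrix n n ℝ} (hM : M.PosSemidef) :
    1 ≤ (1 + M).det := by
  have hC : (1 + M).IsHermitian := isHermitian_one.add hM.isHermitian
  have hle : algebraMap ℝ (Matrix n n ℝ) 1 ≤ 1 + M := by simpa [le_iff] using hM
  rw [algebraMap_le_iff_le_spectrum hC.isSelfAdjoint] at hle
  rw [hC.det_eq_prod_eigenvalues]
  exact_mod_cast Finset.one_le_prod fun i _ => hle _ (hC.eigenvalues_mem_spectrum_real i)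

theorem det_le_det_of_posSemidef_sub {A B : Matrix n n ℝ} (hB : B.PosSemidef)
    (hAB : (A - B).PosSemidef) : B.det ≤ A.det := by
  by_cases hB0 : B.det = 0
  · rw [hB0]
    exact (by simpa using hAB.add hB : A.PosSemidef).det_nonneg
  have hBpd : B.PosDef := hB.posDef_iff_det_ne_zero.mpr hB0
  obtain ⟨Q, hQ⟩ := CStarAlgebra.nonneg_iff_eq_star_mul_self.mp hAB.nonneg
  rw [show A = B + Qᴴ * Q by rw [← star_eq_conjTranspose, ← hQ, add_sub_cancel],
    det_add_mul _ _ (isUnit_iff_ne_zero.mpr hB0)]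
  exact le_mul_of_one_le_right hB.det_nonneg
    (hBpd.inv.posSemidef.mul_mul_conjTranspose_same Q).one_le_det_one_add

theorem det_sub_mul {α : Type*} [CommRing α] {A : Matrix m m α} (U : Matrix m n α)
    (V : Matrix n m α) (hA : IsUnit A.det) :
    (A - U * V).det = A.det * (1 - V * A⁻¹ * U).det := by
  rw [sub_eq_add_neg, ← Matrix.neg_mul, det_add_mul _ _ hA, Matrix.mul_neg, ← sub_eq_add_neg]

theorem det_one_sub_mul_inv_mul_conjTranspose_le {H₁ H₂ : Matrix n n ℝ} (R : Matrix m n ℝ)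
    (hH₂ : H₂.PosDef) (hH₂R : (H₂ - Rᴴ * R).PosSemidef) (hH₁₂ : (H₁ - H₂).PosSemidef) :
    (1 - R * H₂⁻¹ * Rᴴ).det ≤ (1 - R * H₁⁻¹ * Rᴴ).det := by
  have h₂ : (1 - R * H₂⁻¹ * Rᴴ).PosSemidef := by
    simpa using (posSemidef_sub_mul_inv_mul_conjTranspose_iff hH₂ PosDef.one Rᴴ).mp
      (by simpa using hH₂R)
  refine det_le_det_of_posSemidef_sub h₂ ?_
  rw [sub_sub_sub_cancel_left, ← Matrix.sub_mul, ← Matrix.mul_sub]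
  exact (hH₂.posSemidef_inv_sub_inv hH₁₂).mul_mul_conjTranspose_same R

end Matrix

theorem det_loewner_monotone (n : ℕ) (H1 H2 W : Matrix (Fin n) (Fin n) ℝ)
    (hW : W.PosSemidef) (hH2W : (H2 - W).PosSemidef) (hH12 : (H1 - H2).PosSemidef) :
    (H2 - W).det * H1.det ≤ (H1 - W).det * H2.det := by
  have hH2 : H2.PosSemidef := by simpa using hH2W.add hW
  have hH1 : H1.PosSemidef := by simpa using hH12.add hH2
  by_cases hdet : H2.det = 0
  · have : (H2 - W).det ≤ 0 := hdet ▸ det_le_det_of_posSemidef_sub hH2W (by simpa using hW)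
    rw [hdet, mul_zero]
    exact mul_nonpos_of_nonpos_of_nonneg this hH1.det_nonneg
  have hH2pd : H2.PosDef := hH2.posDef_iff_det_ne_zero.mpr hdet
  have hH1pd : H1.PosDef := by simpa using hH2pd.add_posSemidef hH12
  obtain ⟨R, rfl⟩ := CStarAlgebra.nonneg_iff_eq_star_mul_self.mp hW.nonneg
  rw [star_eq_conjTranspose] at hH2W ⊢
  rw [det_sub_mul _ _ hH1pd.det_pos.ne'.isUnit, det_sub_mul _ _ hH2pd.det_pos.ne'.isUnit]
  calc H2.det * (1 - R * H2⁻¹ * Rᴴ).det * H1.det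
      = (H1.det * H2.det) * (1 - R * H2⁻¹ * Rᴴ).det := by ring
    _ ≤ (H1.det * H2.det) * (1 - R * H1⁻¹ * Rᴴ).det :=
      mul_le_mul_of_nonneg_left (det_one_sub_mul_inv_mul_conjTranspose_le R hH2pd hH2W hH12)
        (mul_nonneg hH1.det_nonneg hH2.det_nonneg)
    _ = H1.det * (1 - R * H1⁻¹ * Rᴴ).det * H2.det := by ring
end

section
/- Let x1, …, x8 be real numbers with x1 + ⋯ + x8 = T and m ≤ x_i ≤ M for all i, where 0 < m ≤ M and T > 3m + 5M. Then x1 · x2 ⋯ x8 ≥ m² · (T − 2m − 5M) · M⁵. -/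
/-!
Peel the entries off one at a time, each time merging the new entry `y` with the residual `u`
of the bound already proved for the rest: `m * (y + u - m) ≤ y * u` as long as `y, u ≥ m`, and
`M * (y + u - M) ≤ y * u` as long as `y, u ≤ M`. Whether the residual should absorb a factor `m`
or a factor `M` is decided by the sign of `∑ l - a * m - b * M` for the remaining entries `l`.
-/

section

variable {m M : ℝ}

lemma mul_add_sub_le_mul_of_le {y u : ℝ} (hy : m ≤ y) (hu : m ≤ u) :
    m * (y + u - m) ≤ y * u := by
  nlinarith [mul_nonneg (sub_nonneg.2 hy) (sub_nonneg.2 hu)]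

lemma mul_add_sub_le_mul_of_ge {y u : ℝ} (hy : y ≤ M) (hu : u ≤ M) :
    M * (y + u - M) ≤ y * u := by
  nlinarith [mul_nonneg (sub_nonneg.2 hy) (sub_nonneg.2 hu)]

lemma mul_mul_add_sub_le {c p t y u : ℝ} (hc : 0 ≤ c) (hy : 0 ≤ y) (hp : c * u ≤ p)
    (ht : t * (y + u - t) ≤ y * u) : c * t * (y + u - t) ≤ y * p :=
  calc c * t * (y + u - t) = c * (t * (y + u - t)) := by ring
    _ ≤ c * (y * u) := mul_le_mul_of_nonneg_left ht hc
    _ = y * (c * u) := by ring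
    _ ≤ y * p := mul_le_mul_of_nonneg_left hp hy

theorem List.pow_mul_pow_mul_sub_le_prod (hm : 0 ≤ m) {l : List ℝ}
    (hl : ∀ y ∈ l, m ≤ y ∧ y ≤ M) {a b : ℕ} (hlen : l.length = a + b + 1) :
    m ^ a * M ^ b * (l.sum - a * m - b * M) ≤ l.prod := by
  induction l generalizing a b with
  | nil => simp at hlen
  | cons y l ih =>
    obtain ⟨hmy, hyM⟩ := hl y List.mem_cons_self
    have hl' : ∀ z ∈ l, m ≤ z ∧ z ≤ M := fun z hz => hl z (List.mem_cons_of_mem _ hz)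
    have hM : 0 ≤ M := hm.trans (hmy.trans hyM)
    have hlen' : l.length = a + b := by simpa using hlen
    rw [List.sum_cons, List.prod_cons]
    obtain ⟨rfl, rfl⟩ | hab : (a = 0 ∧ b = 0) ∨ 1 ≤ a + b := by omega
    · obtain rfl : l = [] := List.length_eq_zero_iff.1 hlen'
      simp
    have hsum_le : l.sum ≤ (a + b) * M := by
      simpa [hlen'] using List.sum_le_card_nsmul l M fun z hz => (hl' z hz).2
    have hsum_ge : (a + b) * m ≤ l.sum := by
      simpa [hlen'] using List.card_nsmul_le_sum l m fun z hz => (hl' z hz).1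
    by_cases hd : 1 ≤ a ∧ 0 ≤ l.sum - a * m - b * M
    · obtain ⟨a, rfl⟩ : ∃ a', a = a' + 1 := ⟨a - 1, by omega⟩
      have key := mul_mul_add_sub_le (t := m) (by positivity) (hm.trans hmy)
        (ih hl' (a := a) (b := b) (by omega))
        (mul_add_sub_le_mul_of_le hmy (by push_cast at hd; linarith))
      convert key using 1
      push_cast; ring
    · have hd' : 1 ≤ b ∧ l.sum - a * m - b * M ≤ 0 := by
        rcases Nat.eq_zero_or_pos a with rfl | ha
        · refine ⟨by omega, ?_⟩
          simp only [Nat.cast_zero, zero_add] at hsum_le ⊢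
          linarith
        · have hneg : l.sum - a * m - b * M < 0 := by
            by_contra h; exact hd ⟨ha, by linarith⟩
          refine ⟨Nat.one_le_iff_ne_zero.2 fun hb => ?_, hneg.le⟩
          simp only [hb, Nat.cast_zero, add_zero] at hsum_ge hneg
          linarith
      obtain ⟨b, rfl⟩ : ∃ b', b = b' + 1 := ⟨b - 1, by omega⟩
      have key := mul_mul_add_sub_le (t := M) (mul_nonneg (pow_nonneg hm a) (pow_nonneg hM b))
        (hm.trans hmy) (ih hl' (a := a) (b := b) (by omega))
        (mul_add_sub_le_mul_of_ge hyM (by push_cast at hd'; linarith))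
      convert key using 1
      push_cast; ring

end

theorem prod_lower_bound_general (x : Fin 8 → ℝ) (m M T : ℝ) (hm : 0 < m)
    (hsum : ∑ i, x i = T) (hx : ∀ i, m ≤ x i ∧ x i ≤ M) :
    m ^ 2 * (T - 2 * m - 5 * M) * M ^ 5 ≤ ∏ i, x i := by
  have hmem : ∀ y ∈ List.ofFn x, m ≤ y ∧ y ≤ M := List.forall_mem_ofFn_iff.2 hx
  have key := List.pow_mul_pow_mul_sub_le_prod hm.le hmem (a := 2) (b := 5) (by simp)
  rw [List.sum_ofFn, List.prod_ofFn, hsum] at key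
  calc m ^ 2 * (T - 2 * m - 5 * M) * M ^ 5 = m ^ 2 * M ^ 5 * (T - 2 * m - 5 * M) := by ring
    _ ≤ ∏ i, x i := by exact_mod_cast key

theorem prod_lower_bound (x : Fin 8 → ℝ) (m M T : ℝ) (hm : 0 < m) (hmM : m ≤ M)
    (hsum : ∑ i, x i = T) (hx : ∀ i, m ≤ x i ∧ x i ≤ M) (hT : 3 * m + 5 * M < T) :
    m ^ 2 * (T - 2 * m - 5 * M) * M ^ 5 ≤ ∏ i, x i :=
  prod_lower_bound_general x m M T hm hsum hx
end

section
/- Let A and B be n×n real positive semidefinite matrices and let s, t ≥ 0 with s + t = 1. Then det(sA + tB) ≥ det(A)^s · det(B)^t (log-concavity of the determinant on positive semidefinite matrices). -/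
/-!
For `s > 0` and singular `A` the left side vanishes, so let `A` be positive definite with square
root `S`. Then `s • A + t • B = S * (s • 1 + t • C) * S` with `C = S⁻¹ * B * S⁻¹` positive
semidefinite and `det C = det B / det A`, which reduces the claim to
`det C ^ t ≤ det (s • 1 + t • C)`. Diagonalising `C`, this is the weighted AM-GM inequality
`λ ^ t ≤ s + t * λ` for each eigenvalue `λ ≥ 0`.
-/

open scoped MatrixOrder

namespace Matrix

variable {n : Type*} [Fintype n] [DecidableEq n]

lemma IsHermitian.det_cfc {A : Matrix n n ℝ} (hA : A.IsHermitian) (f : ℝ → ℝ) :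
    (cfc f A).det = ∏ i, f (hA.eigenvalues i) := by
  rw [hA.cfc_eq]
  simp [IsHermitian.cfc, -Unitary.conjStarAlgAut_apply]

lemma PosSemidef.det_rpow_le_det_smul_one_add_smul {C : Matrix n n ℝ} (hC : C.PosSemidef)
    {s t : ℝ} (hs : 0 ≤ s) (ht : 0 ≤ t) (hst : s + t = 1) :
    C.det ^ t ≤ (s • 1 + t • C).det := by
  have hcfc : s • 1 + t • C = cfc (fun x => s + t * x) C := by
    rw [cfc_add .., cfc_const_mul .., cfc_id' .., cfc_const ..]
    simp [Algebra.algebraMap_eq_smul_one]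
  rw [hcfc, hC.1.det_cfc, hC.1.det_eq_prod_eigenvalues]
  simp only [RCLike.ofReal_real_eq_id, id]
  rw [← Real.finsetProd_rpow _ _ fun i _ => hC.eigenvalues_nonneg i]
  refine Finset.prod_le_prod (fun i _ => Real.rpow_nonneg (hC.eigenvalues_nonneg i) t)
    fun i _ => ?_
  simpa using Real.geom_mean_le_arith_mean2_weighted hs ht zero_le_one (hC.eigenvalues_nonneg i) hst

lemma PosDef.det_rpow_mul_det_rpow_le {A B : Matrix n n ℝ} (hA : A.PosDef) (hB : B.PosSemidef)
    {s t : ℝ} (hs : 0 ≤ s) (ht : 0 ≤ t) (hst : s + t = 1) :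
    A.det ^ s * B.det ^ t ≤ (s • A + t • B).det := by
  set S := CFC.sqrt A
  have hSS : S * S = A := CFC.sqrt_mul_sqrt_self A hA.posSemidef.nonneg
  have hS_herm : Sᴴ = S := (nonneg_iff_posSemidef.mp (CFC.sqrt_nonneg A)).1
  have hS_unit : IsUnit S.det := by
    rw [isUnit_iff_ne_zero, ← mul_self_ne_zero, ← det_mul, hSS]
    exact hA.det_pos.ne'
  set C := S⁻¹ * B * S⁻¹
  have hC : C.PosSemidef := by
    have := hB.conjTranspose_mul_mul_same S⁻¹
    rwa [conjTranspose_nonsing_inv, hS_herm] at this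
  have hSCS : S * C * S = B := by
    simp only [C, ← Matrix.mul_assoc, mul_nonsing_inv _ hS_unit, one_mul]
    rw [Matrix.mul_assoc, nonsing_inv_mul _ hS_unit, mul_one]
  -- keeps `rw` from rewriting `A` and `B` inside the bodies of `S` and `C`
  clear_value S C
  have hdetC : A.det * C.det = B.det := by
    rw [← hSCS, det_mul, det_mul, ← hSS, det_mul]
    ring
  have hcongr : s • A + t • B = S * (s • 1 + t • C) * S := by
    rw [← hSS, ← hSCS]
    simp only [Matrix.mul_add, Matrix.add_mul, Matrix.mul_smul, Matrix.smul_mul, Matrix.mul_one,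
      Matrix.mul_assoc]
  have hA_pos := hA.det_pos
  calc A.det ^ s * B.det ^ t = A.det * C.det ^ t := by
        rw [← hdetC, Real.mul_rpow hA_pos.le hC.det_nonneg, ← mul_assoc, ← Real.rpow_add hA_pos,
          hst, Real.rpow_one]
    _ ≤ A.det * (s • 1 + t • C).det :=
        mul_le_mul_of_nonneg_left (hC.det_rpow_le_det_smul_one_add_smul hs ht hst) hA_pos.le
    _ = (s • A + t • B).det := by
        rw [hcongr, det_mul, det_mul, ← hSS, det_mul]
        ring

end Matrix

theorem det_log_concave (n : ℕ) (A B : Matrix (Fin n) (Fin n) ℝ)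
    (hA : A.PosSemidef) (hB : B.PosSemidef) (s t : ℝ) (hs : 0 ≤ s) (ht : 0 ≤ t)
    (hst : s + t = 1) :
    A.det ^ s * B.det ^ t ≤ (s • A + t • B).det := by
  rcases hs.eq_or_lt with rfl | hs_pos
  · obtain rfl : t = 1 := by linarith
    simp
  by_cases hA_det : A.det = 0
  · rw [hA_det, Real.zero_rpow hs_pos.ne', zero_mul]
    exact ((hA.smul hs).add (hB.smul ht)).det_nonneg
  exact (hA.posDef_iff_det_ne_zero.mpr hA_det).det_rpow_mul_det_rpow_le hB hs ht hst
end

section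
/- Let A be an n×n real positive semidefinite matrix with tr(A) = λ and n ≥ 2. Then det(λ·Id − A) ≥ (n − 1)ⁿ · det(A). -/
/-!
In an eigenbasis of `A` with eigenvalues `μᵢ ≥ 0`, `det A = ∏ μᵢ` and
`det (λ • 1 - A) = ∏ᵢ (λ - μᵢ) = ∏ᵢ ∑_{j ≠ i} μⱼ`. By AM–GM,
`∑_{j ≠ i} μⱼ ≥ (n - 1) (∏_{j ≠ i} μⱼ) ^ (1 / (n - 1))`, and each `μⱼ` occurs in exactly `n - 1`
of the products `∏_{j ≠ i} μⱼ`, so multiplying over `i` gives `(n - 1) ^ n ∏ μᵢ`.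
-/

open Finset

theorem Finset.prod_prod_erase {ι M : Type*} [CommMonoid M] [DecidableEq ι] (s : Finset ι)
    (f : ι → M) : ∏ i ∈ s, ∏ j ∈ s.erase i, f j = (∏ i ∈ s, f i) ^ (#s - 1) := by
  rw [Finset.prod_comm' (s' := fun j => s.erase j) (t' := s) (by aesop), ← prod_pow]
  refine prod_congr rfl fun j hj => ?_
  rw [prod_const, card_erase_of_mem hj]

theorem Real.prod_le_arith_mean_pow {ι : Type*} {s : Finset ι} (hs : s.Nonempty) {f : ι → ℝ}
    (hf : ∀ i ∈ s, 0 ≤ f i) : ∏ i ∈ s, f i ≤ ((∑ i ∈ s, f i) / #s) ^ #s := by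
  have hcard : (0 : ℝ) < #s := mod_cast hs.card_pos
  have amgm := Real.geom_mean_le_arith_mean s (fun _ => 1) f (by simp) (by simpa using hcard) hf
  simp only [Real.rpow_one, sum_const, nsmul_eq_mul, mul_one, one_mul] at amgm
  rwa [Real.rpow_inv_le_iff_of_pos (prod_nonneg hf) (div_nonneg (sum_nonneg hf) hcard.le) hcard,
    Real.rpow_natCast] at amgm

section SumSub

variable {ι : Type*} [Fintype ι] {μ : ι → ℝ}

theorem sum_sub_self_nonneg (hμ : ∀ i, 0 ≤ μ i) (i : ι) : 0 ≤ ∑ j, μ j - μ i := by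
  classical
  rw [← sum_erase_eq_sub (mem_univ i)]
  exact sum_nonneg fun j _ => hμ j

theorem prod_le_prod_sum_sub_div {m : ℕ} (hm : Fintype.card ι = m + 1) (hm0 : m ≠ 0)
    (hμ : ∀ i, 0 ≤ μ i) : ∏ i, μ i ≤ ∏ i, ((∑ j, μ j - μ i) / m) := by
  classical
  have hcard_erase (i : ι) : #(univ.erase i) = m := by simp [hm]
  refine (pow_le_pow_iff_left₀ (prod_nonneg fun i _ => hμ i)
    (prod_nonneg fun i _ => div_nonneg (sum_sub_self_nonneg hμ i) m.cast_nonneg) hm0).mp ?_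
  calc (∏ i, μ i) ^ m = ∏ i, ∏ j ∈ univ.erase i, μ j := by
        rw [Finset.prod_prod_erase, card_univ, hm, Nat.add_sub_cancel]
    _ ≤ ∏ i, ((∑ j, μ j - μ i) / m) ^ m := by
        refine prod_le_prod (fun i _ => prod_nonneg fun j _ => hμ j) fun i _ => ?_
        have hne : (univ.erase i).Nonempty := card_pos.mp (by rw [hcard_erase]; omega)
        simpa only [sum_erase_eq_sub (mem_univ i), hcard_erase] using
          Real.prod_le_arith_mean_pow hne fun j _ => hμ j
    _ = (∏ i, ((∑ j, μ j - μ i) / m)) ^ m := prod_pow _ _ _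

theorem card_sub_one_pow_mul_prod_le_prod_sum_sub (hμ : ∀ i, 0 ≤ μ i) :
    ((Fintype.card ι : ℝ) - 1) ^ Fintype.card ι * ∏ i, μ i ≤ ∏ i, (∑ j, μ j - μ i) := by
  obtain hcard | ⟨m, hm, hm0⟩ : Fintype.card ι < 2 ∨ ∃ m, Fintype.card ι = m + 1 ∧ m ≠ 0 :=
    (Nat.lt_or_ge _ 2).imp_right fun h => ⟨_, (Nat.sub_add_cancel (by omega)).symm, by omega⟩
  · interval_cases h : Fintype.card ι
    · simp [Fintype.card_eq_zero_iff.mp h]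
    · simpa using prod_nonneg fun i _ => sum_sub_self_nonneg hμ i
  calc ((Fintype.card ι : ℝ) - 1) ^ Fintype.card ι * ∏ i, μ i
      = (m : ℝ) ^ (m + 1) * ∏ i, μ i := by rw [hm]; push_cast; ring
    _ ≤ (m : ℝ) ^ (m + 1) * ∏ i, ((∑ j, μ j - μ i) / m) :=
        mul_le_mul_of_nonneg_left (prod_le_prod_sum_sub_div hm hm0 hμ) (by positivity)
    _ = ∏ i, (∑ j, μ j - μ i) := by
        rw [prod_div_distrib, prod_const, card_univ, hm]
        field_simp

end SumSub

theorem Matrix.IsHermitian.det_smul_one_sub {𝕜 n : Type*} [RCLike 𝕜] [Fintype n] [DecidableEq n]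
    {A : Matrix n n 𝕜} (hA : A.IsHermitian) (t : 𝕜) :
    (t • (1 : Matrix n n 𝕜) - A).det = ∏ i, (t - hA.eigenvalues i) := by
  rw [smul_one_eq_diagonal, ← scalar_apply, ← eval_charpoly, hA.charpoly_eq, Polynomial.eval_prod]
  simp

theorem det_trace_sub_bound_general (n : ℕ) (A : Matrix (Fin n) (Fin n) ℝ)
    (hA : A.PosSemidef) (l : ℝ) (htr : A.trace = l) :
    ((n : ℝ) - 1) ^ n * A.det ≤ (l • (1 : Matrix (Fin n) (Fin n) ℝ) - A).det := by
  have hH := hA.isHermitian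
  rw [hH.det_smul_one_sub, hH.det_eq_prod_eigenvalues, ← htr, hH.trace_eq_sum_eigenvalues]
  simpa using card_sub_one_pow_mul_prod_le_prod_sum_sub hA.eigenvalues_nonneg

theorem det_trace_sub_bound (n : ℕ) (hn : 2 ≤ n) (A : Matrix (Fin n) (Fin n) ℝ)
    (hA : A.PosSemidef) (l : ℝ) (htr : A.trace = l) :
    ((n : ℝ) - 1) ^ n * A.det ≤ (l • (1 : Matrix (Fin n) (Fin n) ℝ) - A).det :=
  det_trace_sub_bound_general n A hA l htr
end

section
/- Let μ1 ≥ μ2 ≥ ⋯ ≥ μ8 > 0 with μ1 ≥ μ2 + ⋯ + μ8, set μ = μ1 + ⋯ + μ8, and fix β ∈ [0,1]. Consider E_β(z1,…,z8) = ∏_{j=1}^{8} (1 − z_j/μ_j) on the domain {0 ≤ z_j ≤ μ_j, Σ z_j ≥ βμ}. Then sup E_β ≤ (μ1 − βμ/2)/μ1. -/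
/-!
Put `a j = z j / μ j ∈ [0, 1]` and `t = ∑_{j ≥ 1} a j`. From `1 - x ≤ exp (-x)` and
`1 + t ≤ exp t` the tail of the product is at most `1 / (1 + t)`. Since every `μ j ≤ μ 0`, the
mass constraint gives `s := S / μ 0 ≤ a 0 + t`, and since the tail of `μ` is at most `μ 0` it
also gives `s ≤ a 0 + 1`. An elementary inequality then yields `(1 - a 0) / (1 + t) ≤ 1 - s / 2`.
-/

open Finset

theorem prod_one_sub_mul_one_add_sum_le {ι : Type*} (s : Finset ι) {a : ι → ℝ}
    (h0 : ∀ i ∈ s, 0 ≤ a i) (h1 : ∀ i ∈ s, a i ≤ 1) :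
    (∏ i ∈ s, (1 - a i)) * (1 + ∑ i ∈ s, a i) ≤ 1 := by
  have hprod : ∏ i ∈ s, (1 - a i) ≤ Real.exp (-∑ i ∈ s, a i) := by
    rw [← sum_neg_distrib, Real.exp_sum]
    exact prod_le_prod (fun i hi => sub_nonneg.2 (h1 i hi)) fun i _ => Real.one_sub_le_exp_neg _
  calc (∏ i ∈ s, (1 - a i)) * (1 + ∑ i ∈ s, a i)
      ≤ Real.exp (-∑ i ∈ s, a i) * Real.exp (∑ i ∈ s, a i) := by
        gcongr
        · exact add_nonneg zero_le_one (sum_nonneg h0)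
        · exact Real.add_one_le_exp _ |>.trans_eq' (add_comm _ _)
    _ = 1 := by rw [← Real.exp_add, neg_add_cancel, Real.exp_zero]

theorem one_sub_le_one_sub_half_mul_one_add {a s t : ℝ} (ha0 : 0 ≤ a) (ha1 : a ≤ 1)
    (ht : 0 ≤ t) (hst : s ≤ a + t) (hsa : s ≤ a + 1) :
    1 - a ≤ (1 - s / 2) * (1 + t) := by
  nlinarith [mul_nonneg (by linarith : (0:ℝ) ≤ 1 - s / 2) (by linarith : (0:ℝ) ≤ a + t - s),
    mul_nonneg ht (by linarith : (0:ℝ) ≤ a - s + 1)]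

theorem prod_one_sub_div_le {n : ℕ} (μ : Fin (n + 1) → ℝ) (hpos : ∀ j, 0 < μ j)
    (hle : ∀ j, μ j ≤ μ 0) (hdom : (∑ j, μ j) - μ 0 ≤ μ 0)
    (z : Fin (n + 1) → ℝ) (hz : ∀ j, 0 ≤ z j ∧ z j ≤ μ j) {S : ℝ} (hS : S ≤ ∑ j, z j) :
    ∏ j, (1 - z j / μ j) ≤ (μ 0 - S / 2) / μ 0 := by
  set a : Fin (n + 1) → ℝ := fun j => z j / μ j
  have ha0 (j) : 0 ≤ a j := div_nonneg (hz j).1 (hpos j).le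
  have ha1 (j) : a j ≤ 1 := (div_le_one (hpos j)).2 (hz j).2
  have hz_eq (j) : z j = μ j * a j := (mul_div_cancel₀ _ (hpos j).ne').symm
  set t := ∑ i : Fin n, a i.succ
  have ht : 0 ≤ t := sum_nonneg fun i _ => ha0 i.succ
  have htail_le_t : ∑ i : Fin n, z i.succ ≤ μ 0 * t := by
    rw [mul_sum]
    exact sum_le_sum fun i _ => (hz_eq i.succ).trans_le
      (mul_le_mul_of_nonneg_right (hle i.succ) (ha0 i.succ))
  have htail_le_μ0 : ∑ i : Fin n, z i.succ ≤ μ 0 := by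
    rw [Fin.sum_univ_succ] at hdom
    exact (sum_le_sum fun i _ => (hz i.succ).2).trans (by linarith)
  rw [Fin.sum_univ_succ, hz_eq 0] at hS
  have hμ0 := hpos 0
  have hst : S / μ 0 ≤ a 0 + t := by
    rw [div_le_iff₀ hμ0]; linarith
  have hsa : S / μ 0 ≤ a 0 + 1 := by
    rw [div_le_iff₀ hμ0]; linarith
  have hP := prod_one_sub_mul_one_add_sum_le (a := fun i : Fin n => a i.succ) univ
    (fun i _ => ha0 i.succ) fun i _ => ha1 i.succ
  have hbound := one_sub_le_one_sub_half_mul_one_add (ha0 0) (ha1 0) ht hst hsa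
  rw [Fin.prod_univ_succ, show (μ 0 - S / 2) / μ 0 = 1 - S / μ 0 / 2 by field_simp]
  refine le_of_mul_le_mul_right ?_ (by linarith : 0 < 1 + t)
  calc (1 - a 0) * (∏ i : Fin n, (1 - a i.succ)) * (1 + t)
      = (1 - a 0) * ((∏ i : Fin n, (1 - a i.succ)) * (1 + t)) := mul_assoc _ _ _
    _ ≤ 1 - a 0 := mul_le_of_le_one_right (sub_nonneg.2 (ha1 0)) hP
    _ ≤ _ := hbound

theorem E_beta_sup_bound_general (μ : Fin 8 → ℝ) (hpos : ∀ j, 0 < μ j)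
    (hmono : ∀ i j : Fin 8, i ≤ j → μ j ≤ μ i)
    (hdom : (∑ j, μ j) - μ 0 ≤ μ 0)
    (β : ℝ)
    (z : Fin 8 → ℝ) (hz : ∀ j, 0 ≤ z j ∧ z j ≤ μ j)
    (hzsum : β * (∑ j, μ j) ≤ ∑ j, z j) :
    ∏ j, (1 - z j / μ j) ≤ (μ 0 - β * (∑ j, μ j) / 2) / μ 0 :=
  prod_one_sub_div_le μ hpos (fun j => hmono 0 j (Fin.zero_le j)) hdom z hz hzsum

theorem E_beta_sup_bound (μ : Fin 8 → ℝ) (hpos : ∀ j, 0 < μ j)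
    (hmono : ∀ i j : Fin 8, i ≤ j → μ j ≤ μ i)
    (hdom : (∑ j, μ j) - μ 0 ≤ μ 0)
    (β : ℝ) (hβ0 : 0 ≤ β) (hβ1 : β ≤ 1)
    (z : Fin 8 → ℝ) (hz : ∀ j, 0 ≤ z j ∧ z j ≤ μ j)
    (hzsum : β * (∑ j, μ j) ≤ ∑ j, z j) :
    ∏ j, (1 - z j / μ j) ≤ (μ 0 - β * (∑ j, μ j) / 2) / μ 0 :=
  E_beta_sup_bound_general μ hpos hmono hdom β z hz hzsum
end
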